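/- Let $d \ge 2$, $\alpha > \beta \ge 0$, and $\delta > 0$. Define the layer $\mathfrak{L}_\mu := \{ j \in \mathbb{N}_0^d : \mu - 1 < \alpha |j|_1 - \beta |j|_\infty \le \mu \}$ for $\mu \in \mathbb{N}$. Then there is a constant $C > 0$ independent of $\mu$ such that $\sum_{j \in \mathfrak{L}_\mu} 2^{-\delta(|j|_1 - |j|_\infty)} \le C$ for all $\mu \in \mathbb{N} \setminus \{1\}$. -/

import Mathlib

/-!
Assign each `j` of the layer to a coordinate `i` at which `|j|_∞ = j i` is attained. With
`K = ∑_{l ≠ i} j l` the weight is `2^{-δ K}` and the layer condition reads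
`μ - 1 < (α - β) j i + α K ≤ μ`; as `α - β > 0`, for fixed other coordinates this leaves at most
`⌈(α - β)⁻¹⌉ + 1` values of `j i`. The remaining sum over the other `d - 1` coordinates is a
product of geometric series, so the layer sum is at most
`d (⌈(α - β)⁻¹⌉ + 1) (1 - 2^{-δ})^{-(d-1)}` for every `μ`.
-/

open scoped ENNReal

theorem ENNReal.tsum_fin_pi_prod {α : Type*} (n : ℕ) (g : Fin n → α → ℝ≥0∞) :
    ∑' v : Fin n → α, ∏ i, g i (v i) = ∏ i, ∑' a, g i a := by
  induction n with
  | zero => simp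
  | succ n ih =>
    rw [← (Fin.consEquiv fun _ => α).tsum_eq, ENNReal.tsum_prod']
    simp [Fin.prod_univ_succ, ENNReal.tsum_mul_left, ENNReal.tsum_mul_right, ih]

theorem ENNReal.tsum_pi_prod {α ι : Type*} [Fintype ι] (g : ι → α → ℝ≥0∞) :
    ∑' v : ι → α, ∏ i, g i (v i) = ∏ i, ∑' a, g i a := by
  let e := Fintype.equivFin ι
  rw [← (e.arrowCongr (Equiv.refl α)).symm.tsum_eq, ← e.symm.prod_comp, ← tsum_fin_pi_prod]
  refine tsum_congr fun v => ?_
  simpa using e.prod_comp fun i => g (e.symm i) (v i)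

theorem ENNReal.tsum_pow_sum {ι : Type*} [Fintype ι] (r : ℝ≥0∞) :
    ∑' v : ι → ℕ, r ^ (∑ i, v i) = (1 - r)⁻¹ ^ Fintype.card ι := by
  simp_rw [← Finset.prod_pow_eq_pow_sum, tsum_pi_prod, ENNReal.tsum_geometric, Finset.prod_const,
    Finset.card_univ]

theorem Set.encard_le_of_forall_le_add {s : Set ℕ} {n : ℕ}
    (h : ∀ t ∈ s, ∀ t' ∈ s, t ≤ t' + n) : s.encard ≤ n + 1 := by
  rcases s.eq_empty_or_nonempty with rfl | hs
  · simp
  have hsub : s ⊆ Set.Icc (sInf s) (sInf s + n) := fun t ht =>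
    ⟨Nat.sInf_le ht, h t ht _ (Nat.sInf_mem hs)⟩
  calc s.encard ≤ (Set.Icc (sInf s) (sInf s + n)).encard := Set.encard_le_encard hsub
    _ = n + 1 := by
      rw [← Finset.coe_Icc, Set.encard_coe_eq_coe_finsetCard, Nat.card_Icc]
      norm_cast; omega

theorem encard_setOf_affine_mem_Ioc_le {a : ℝ} (ha : 0 < a) (y x : ℝ) :
    {t : ℕ | a * t + y ∈ Set.Ioc (x - 1) x}.encard ≤ ⌈a⁻¹⌉₊ + 1 := by
  refine Set.encard_le_of_forall_le_add fun t ht t' ht' => ?_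
  have hgap : (t - t' : ℝ) < 1 / a := (lt_div_iff₀' ha).2 (by linarith [ht.2, ht'.1])
  have : (t : ℝ) ≤ t' + ⌈a⁻¹⌉₊ := by linarith [one_div a ▸ hgap, Nat.le_ceil a⁻¹]
  exact_mod_cast this

theorem tsum_indicator_affine_layer_prod_le {β : Type*} {a : ℝ} (ha : 0 < a) (x : ℝ)
    (w : β → ℝ) (g : β → ℝ≥0∞) :
    ∑' p : ℕ × β, {p : ℕ × β | a * p.1 + w p.2 ∈ Set.Ioc (x - 1) x}.indicator (g ·.2) p ≤
      (⌈a⁻¹⌉₊ + 1) * ∑' b, g b := by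
  rw [ENNReal.tsum_prod', ENNReal.tsum_comm, ← ENNReal.tsum_mul_left]
  refine ENNReal.tsum_le_tsum fun b => ?_
  calc ∑' t : ℕ, {p : ℕ × β | a * p.1 + w p.2 ∈ Set.Ioc (x - 1) x}.indicator (g ·.2) (t, b)
      = ∑' _ : {t : ℕ | a * t + w b ∈ Set.Ioc (x - 1) x}, g b := (tsum_subtype _ _).symm
    _ = {t : ℕ | a * t + w b ∈ Set.Ioc (x - 1) x}.encard * g b := ENNReal.tsum_set_const _ _
    _ ≤ (⌈a⁻¹⌉₊ + 1) * g b := by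
      gcongr
      exact_mod_cast encard_setOf_affine_mem_Ioc_le ha (w b) x

section

variable {ι : Type*} [Fintype ι]

def layer (α β x : ℝ) : Set (ι → ℕ) :=
  {j | α * ∑ i, (j i : ℝ) - β * (Finset.univ.sup j : ℕ) ∈ Set.Ioc (x - 1) x}

variable [DecidableEq ι]

-- When `j i = |j|_∞`, `j ∈ layer α β x` is equivalent to `j ∈ layerAt (α - β) α x i`.
def layerAt (a c x : ℝ) (i : ι) : Set (ι → ℕ) :=
  {j | a * j i + c * ∑ l : {l // l ≠ i}, (j l : ℝ) ∈ Set.Ioc (x - 1) x}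

theorem tsum_indicator_layerAt_le {a : ℝ} (ha : 0 < a) (c x : ℝ) (r : ℝ≥0∞) (i : ι) :
    ∑' j, (layerAt a c x i).indicator (fun j => r ^ ∑ l : {l // l ≠ i}, j l) j ≤
      (⌈a⁻¹⌉₊ + 1) * (1 - r)⁻¹ ^ (Fintype.card ι - 1) := by
  let e := Equiv.piSplitAt i fun _ => ℕ
  calc _ = ∑' p, {p : ℕ × ({l // l ≠ i} → ℕ) |
            a * p.1 + c * ∑ l, (p.2 l : ℝ) ∈ Set.Ioc (x - 1) x}.indicator
          (fun p => r ^ ∑ l, p.2 l) p := e.tsum_eq _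
    _ ≤ (⌈a⁻¹⌉₊ + 1) * ∑' v : {l // l ≠ i} → ℕ, r ^ ∑ l, v l :=
      tsum_indicator_affine_layer_prod_le ha x (fun v : {l // l ≠ i} → ℕ => c * ∑ l, (v l : ℝ))
        fun v => r ^ ∑ l, v l
    _ = _ := by
      rw [ENNReal.tsum_pow_sum, Fintype.card_subtype_compl, Fintype.card_subtype_eq]

theorem indicator_layer_le_sum_indicator_layerAt [Nonempty ι] (α β x δ : ℝ) (j : ι → ℕ) :
    (layer α β x).indicator
        (fun j => (2 : ℝ≥0∞) ^ (-δ * (∑ i, (j i : ℝ) - (Finset.univ.sup j : ℕ)))) j ≤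
      ∑ i, (layerAt (α - β) α x i).indicator
        (fun j => (2 ^ (-δ)) ^ ∑ l : {l // l ≠ i}, j l) j := by
  by_cases hj : j ∈ layer α β x
  · obtain ⟨i, -, hi⟩ := Finset.exists_mem_eq_sup Finset.univ Finset.univ_nonempty j
    have hsum : ∑ l, (j l : ℝ) = j i + ∑ l : {l // l ≠ i}, (j l : ℝ) :=
      Fintype.sum_eq_add_sum_subtype_ne _ i
    have hmem : j ∈ layerAt (α - β) α x i := by
      have : (α - β) * j i + α * ∑ l : {l // l ≠ i}, (j l : ℝ) =
          α * ∑ l, (j l : ℝ) - β * (Finset.univ.sup j : ℕ) := by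
        rw [hsum, hi]
        ring
      rw [layerAt, Set.mem_ofPred_eq, this]
      exact hj
    refine le_trans ?_ (Finset.single_le_sum (fun i _ => zero_le) (Finset.mem_univ i))
    rw [Set.indicator_of_mem hj, Set.indicator_of_mem hmem, hsum, hi, add_sub_cancel_left,
      ← Nat.cast_sum, ENNReal.rpow_mul, ENNReal.rpow_natCast]
  · rw [Set.indicator_of_notMem hj]
    exact zero_le

theorem tsum_indicator_layer_le [Nonempty ι] {α β : ℝ} (hαβ : β < α) (x δ : ℝ) :
    ∑' j, (layer α β x).indicator
        (fun j : ι → ℕ => (2 : ℝ≥0∞) ^ (-δ * (∑ i, (j i : ℝ) - (Finset.univ.sup j : ℕ)))) j ≤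
      Fintype.card ι * ((⌈(α - β)⁻¹⌉₊ + 1) * (1 - 2 ^ (-δ))⁻¹ ^ (Fintype.card ι - 1)) := by
  let r : ℝ≥0∞ := 2 ^ (-δ)
  calc _ ≤ ∑' j : ι → ℕ, ∑ i, (layerAt (α - β) α x i).indicator
          (fun j => r ^ ∑ l : {l // l ≠ i}, j l) j :=
        ENNReal.tsum_le_tsum (indicator_layer_le_sum_indicator_layerAt α β x δ)
    _ = ∑ i, ∑' j : ι → ℕ, (layerAt (α - β) α x i).indicator
          (fun j => r ^ ∑ l : {l // l ≠ i}, j l) j :=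
        Summable.tsum_finsetSum fun _ _ => ENNReal.summable
    _ ≤ ∑ _i : ι, (⌈(α - β)⁻¹⌉₊ + 1 : ℝ≥0∞) * (1 - r)⁻¹ ^ (Fintype.card ι - 1) :=
        Finset.sum_le_sum fun i _ => tsum_indicator_layerAt_le (sub_pos.2 hαβ) α x r i
    _ = _ := by rw [Finset.sum_const, Finset.card_univ, nsmul_eq_mul]

end

theorem log_killer_general (d : ℕ) (hd : 2 ≤ d) (α β δ : ℝ) (hαβ : β < α)
    (hδ : 0 < δ) :
    ∃ C : ℝ, 0 < C ∧ ∀ μ : ℕ, 2 ≤ μ →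
      (∑' j : Fin d → ℕ,
        Set.indicator
          {j : Fin d → ℕ |
            (μ : ℝ) - 1 < α * (∑ i, (j i : ℝ)) - β * ((Finset.univ.sup j : ℕ) : ℝ) ∧
            α * (∑ i, (j i : ℝ)) - β * ((Finset.univ.sup j : ℕ) : ℝ) ≤ (μ : ℝ)}
          (fun j =>
            (2 : ℝ≥0∞) ^ (-δ * ((∑ i, (j i : ℝ)) - ((Finset.univ.sup j : ℕ) : ℝ)))) j) ≤
        ENNReal.ofReal C := by
  have : Nonempty (Fin d) := ⟨⟨0, by omega⟩⟩
  set B : ℝ≥0∞ := d * ((⌈(α - β)⁻¹⌉₊ + 1) * (1 - 2 ^ (-δ))⁻¹ ^ (d - 1))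
  have hr : (2 : ℝ≥0∞) ^ (-δ) < 1 :=
    ENNReal.rpow_lt_one_of_one_lt_of_neg (by norm_num) (neg_neg_of_pos hδ)
  have hB : B ≠ ⊤ := by
    simp [B, ENNReal.mul_eq_top, ENNReal.inv_eq_top, tsub_eq_zero_iff_le, not_le.2 hr]
  refine ⟨B.toReal + 1, by positivity, fun μ _ => ?_⟩
  calc _ ≤ B :=
        (tsum_indicator_layer_le (ι := Fin d) hαβ μ δ).trans_eq (by rw [Fintype.card_fin])
    _ ≤ ENNReal.ofReal (B.toReal + 1) :=
        (ENNReal.le_ofReal_iff_toReal_le hB (by positivity)).2 (le_add_of_nonneg_right zero_le_one)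

/-- 'Log-killer' lemma: for `d ≥ 2`, `α > β ≥ 0`, `δ > 0`, the weighted sums
`∑_{j ∈ 𝔏_μ} 2^{-δ(|j|₁ - |j|∞)}` over the anisotropic layers
`𝔏_μ = { j ∈ ℕ₀^d : μ - 1 < α|j|₁ - β|j|∞ ≤ μ }` are bounded uniformly in
`μ ∈ ℕ \ {1}` (μ ≥ 2). -/
theorem log_killer (d : ℕ) (hd : 2 ≤ d) (α β δ : ℝ) (hβ : 0 ≤ β) (hαβ : β < α)
    (hδ : 0 < δ) :
    ∃ C : ℝ, 0 < C ∧ ∀ μ : ℕ, 2 ≤ μ →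
      (∑' j : Fin d → ℕ,
        Set.indicator
          {j : Fin d → ℕ |
            (μ : ℝ) - 1 < α * (∑ i, (j i : ℝ)) - β * ((Finset.univ.sup j : ℕ) : ℝ) ∧
            α * (∑ i, (j i : ℝ)) - β * ((Finset.univ.sup j : ℕ) : ℝ) ≤ (μ : ℝ)}
          (fun j =>
            (2 : ℝ≥0∞) ^ (-δ * ((∑ i, (j i : ℝ)) - ((Finset.univ.sup j : ℕ) : ℝ)))) j) ≤
        ENNReal.ofReal C :=
  log_killer_general d hd α β δ hαβ hδ
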